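/- Let H be a finite simple graph with at least one edge that is both vertex-transitive and edge-transitive, let H_1, …, H_n be nonempty graphs on V(H) whose edge sets are the orbits of Aut(H) acting on unordered pairs of distinct vertices of H, with H_n = H, let A_i denote the adjacency matrix of H_i for 1 ≤ i ≤ n, and let A_0 be the identity matrix of dimension |V(H)|. If z_0, z_1, …, z_n are real numbers such that Z := Σ_{i=0}^n z_i A_i is an entrywise nonnegative positive semidefinite matrix, then the sum of all entries of Z satisfies sum(Z) ≤ (1 + λ_max(A_n)/|λ_min(A_n)|) · sum((J − A_n) ∘ Z), where J is the all-ones matrix and ∘ denotes the entrywise (Schur) product. -/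

import Mathlib

open Matrix Finset

namespace SpectralFrac

variable {V : Type*}

/-- The real adjacency matrix of a simple graph is Hermitian. -/
theorem adjMatrix_isHermitian [Fintype V] [DecidableEq V] (G : SimpleGraph V)
    [DecidableRel G.Adj] : (G.adjMatrix ℝ).IsHermitian := by
  rw [Matrix.IsHermitian, Matrix.conjTranspose_eq_transpose_of_trivial]
  exact G.isSymm_adjMatrix

/-- `s⁺(G)`: the sum of the squares of the positive eigenvalues of the adjacency matrix. -/
noncomputable def sPos [Fintype V] [DecidableEq V] (G : SimpleGraph V) [DecidableRel G.Adj] : ℝ :=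
  ∑ i, if 0 < (adjMatrix_isHermitian G).eigenvalues i
    then ((adjMatrix_isHermitian G).eigenvalues i) ^ 2 else 0

/-- `s⁻(G)`: the sum of the squares of the negative eigenvalues of the adjacency matrix. -/
noncomputable def sNeg [Fintype V] [DecidableEq V] (G : SimpleGraph V) [DecidableRel G.Adj] : ℝ :=
  ∑ i, if (adjMatrix_isHermitian G).eigenvalues i < 0
    then ((adjMatrix_isHermitian G).eigenvalues i) ^ 2 else 0

/-- The largest eigenvalue of the adjacency matrix of `G`. -/
noncomputable def lamMax [Fintype V] [DecidableEq V] (G : SimpleGraph V) [DecidableRel G.Adj] : ℝ :=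
  ⨆ i, (adjMatrix_isHermitian G).eigenvalues i

/-- The smallest eigenvalue of the adjacency matrix of `G`. -/
noncomputable def lamMin [Fintype V] [DecidableEq V] (G : SimpleGraph V) [DecidableRel G.Adj] : ℝ :=
  ⨅ i, (adjMatrix_isHermitian G).eigenvalues i

/-- A graph is edge-transitive if its automorphism group acts transitively on edges. -/
def IsEdgeTransitive (H : SimpleGraph V) : Prop :=
  ∀ ⦃u v x y : V⦄, H.Adj u v → H.Adj x y → ∃ π : H ≃g H, s(π u, π v) = s(x, y)

/-- A graph is vertex-transitive if its automorphism group acts transitively on vertices. -/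
def IsVertexTransitive (H : SimpleGraph V) : Prop :=
  ∀ u v : V, ∃ π : H ≃g H, π u = v

/-- The Kneser graph `K_{n;k}`: vertices are `k`-subsets of an `n`-set, adjacent iff disjoint. -/
def kneserGraph (n k : ℕ) : SimpleGraph {s : Finset (Fin n) // s.card = k} where
  Adj a b := a ≠ b ∧ Disjoint a.1 b.1
  symm := ⟨fun a b h => ⟨h.1.symm, h.2.symm⟩⟩
  loopless := ⟨fun a h => h.1 rfl⟩

instance kneserGraph.adjDecidable (n k : ℕ) : DecidableRel (kneserGraph n k).Adj :=
  fun a b => inferInstanceAs (Decidable (a ≠ b ∧ Disjoint a.1 b.1))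

/-- The fractional chromatic number: the infimum of `n / k` over all pairs `(n, k)` such that
`G` admits a homomorphism into the Kneser graph `K_{n;k}`. -/
noncomputable def fracChromaticNumber (G : SimpleGraph V) : ℝ :=
  sInf {q : ℝ | ∃ n k : ℕ, 0 < k ∧ Nonempty (G →g kneserGraph n k) ∧ q = (n : ℝ) / k}

/-- The automorphism group of `H`, as a finset of permutations of the vertices. -/
def autSet [Fintype V] [DecidableEq V] (H : SimpleGraph V) [DecidableRel H.Adj] :
    Finset (Equiv.Perm V) :=
  Finset.univ.filter fun π => ∀ u v, H.Adj (π u) (π v) ↔ H.Adj u v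

end SpectralFrac

/-!
Let `x` be a unit eigenvector of `A = A(H)` for `μ = λ_min(A)` and average the rank-one matrix
`x xᵀ` over `Aut(H)`: `G = ∑_{π ∈ Aut(H)} (x ∘ π)(x ∘ π)ᵀ`. Then `G` is positive semidefinite, so
`sum(G ∘ Z) ≥ 0`. Vertex-transitivity makes the diagonal of `G` constant, equal to `g / n`
(`g = |Aut(H)|`, `n = |V|`), edge-transitivity makes `G` constant on edges, equal to `g μ / D`
(`D = sum(A)`), and off the edges `G u v ≤ g / n` by AM-GM. Since `D ≤ n λ_max` (Rayleigh
quotient of the all-ones vector), `(λ_max - μ)(J - A) + μ J - (n λ_max / g) G` is entrywise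
nonnegative, whence `μ sum(Z) + (λ_max - μ) sum((J - A) ∘ Z) ≥ 0`; as `μ < 0` this is the bound.
-/

lemma Matrix.dotProduct_mulVec_eq_sum_sum {n R : Type*} [Fintype n] [CommSemiring R]
    (M : Matrix n n R) (x y : n → R) :
    x ⬝ᵥ M *ᵥ y = ∑ u, ∑ v, M u v * (x u * y v) := by
  simp only [dotProduct, mulVec, Finset.mul_sum]
  exact Finset.sum_congr rfl fun u _ => Finset.sum_congr rfl fun v _ => by ring

namespace Matrix.IsHermitian

variable {n : Type*} [Fintype n] [DecidableEq n] {A : Matrix n n ℝ} (hA : A.IsHermitian)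

lemma dotProduct_eq_sum_eigenvectorBasis (x y : n → ℝ) :
    x ⬝ᵥ y = ∑ i, (hA.eigenvectorBasis i ⬝ᵥ x) * (hA.eigenvectorBasis i ⬝ᵥ y) := by
  have := hA.eigenvectorBasis.sum_inner_mul_inner (WithLp.toLp 2 x) (WithLp.toLp 2 y)
  simp only [EuclideanSpace.inner_eq_star_dotProduct, star_trivial] at this
  rw [dotProduct_comm, ← this]
  exact Finset.sum_congr rfl fun i _ => by rw [dotProduct_comm y]

lemma dotProduct_mulVec_eq_sum_eigenvalues (y : n → ℝ) :
    y ⬝ᵥ A *ᵥ y = ∑ i, hA.eigenvalues i * (hA.eigenvectorBasis i ⬝ᵥ y) ^ 2 := by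
  have hAT : Aᵀ = A := by simpa [conjTranspose_eq_transpose_of_trivial] using hA.eq
  rw [hA.dotProduct_eq_sum_eigenvectorBasis]
  refine Finset.sum_congr rfl fun i _ => ?_
  rw [dotProduct_mulVec, ← mulVec_transpose, hAT, hA.mulVec_eigenvectorBasis, smul_dotProduct,
    smul_eq_mul]
  ring

lemma dotProduct_mulVec_le_iSup_eigenvalues (y : n → ℝ) :
    y ⬝ᵥ A *ᵥ y ≤ (⨆ i, hA.eigenvalues i) * (y ⬝ᵥ y) := by
  rw [hA.dotProduct_mulVec_eq_sum_eigenvalues, hA.dotProduct_eq_sum_eigenvectorBasis y y,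
    Finset.mul_sum]
  refine Finset.sum_le_sum fun i _ => ?_
  rw [← sq]
  exact mul_le_mul_of_nonneg_right (le_ciSup (Set.finite_range _).bddAbove i) (sq_nonneg _)

lemma exists_unit_eigenvector_iInf_eigenvalues [Nonempty n] :
    ∃ x : n → ℝ, A *ᵥ x = (⨅ i, hA.eigenvalues i) • x ∧ x ⬝ᵥ x = 1 := by
  obtain ⟨i, hi⟩ := exists_eq_ciInf_of_finite (f := hA.eigenvalues)
  refine ⟨hA.eigenvectorBasis i, hi ▸ hA.mulVec_eigenvectorBasis i, ?_⟩
  have := real_inner_self_eq_norm_sq (hA.eigenvectorBasis i)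
  rw [hA.eigenvectorBasis.orthonormal.1 i, one_pow] at this
  simpa only [EuclideanSpace.inner_eq_star_dotProduct, star_trivial] using this

lemma iInf_eigenvalues_neg (htr : A.trace = 0) (hA0 : A ≠ 0) :
    ⨅ i, hA.eigenvalues i < 0 := by
  by_contra! h
  have hnn : ∀ i, 0 ≤ hA.eigenvalues i :=
    fun i => h.trans (ciInf_le (Set.finite_range _).bddBelow i)
  rw [hA.trace_eq_sum_eigenvalues] at htr
  simp only [RCLike.ofReal_real_eq_id, id_eq] at htr
  rw [Finset.sum_eq_zero_iff_of_nonneg fun i _ => hnn i] at htr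
  exact hA0 (hA.eigenvalues_eq_zero_iff.1 (funext fun i => htr i (mem_univ i)))

end Matrix.IsHermitian

namespace SpectralFrac

section OrbitGram

variable {V : Type*}

def orbitGram (S : Finset (Equiv.Perm V)) (x : V → ℝ) : Matrix V V ℝ :=
  Matrix.of fun u v => ∑ π ∈ S, x (π u) * x (π v)

lemma orbitGram_comm (S : Finset (Equiv.Perm V)) (x : V → ℝ) (u v : V) :
    orbitGram S x u v = orbitGram S x v u :=
  Finset.sum_congr rfl fun _ _ => mul_comm _ _

lemma orbitGram_le (S : Finset (Equiv.Perm V)) (x : V → ℝ) (u v : V) :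
    orbitGram S x u v ≤ (orbitGram S x u u + orbitGram S x v v) / 2 := by
  simp only [orbitGram, of_apply, ← Finset.sum_add_distrib, Finset.sum_div]
  exact Finset.sum_le_sum fun π _ => by nlinarith [sq_nonneg (x (π u) - x (π v))]

variable [Fintype V]

lemma dotProduct_mulVec_comp_perm {M : Matrix V V ℝ} {π : Equiv.Perm V}
    (hM : ∀ u v, M (π u) (π v) = M u v) (x : V → ℝ) :
    (x ∘ π) ⬝ᵥ M *ᵥ (x ∘ π) = x ⬝ᵥ M *ᵥ x := by
  rw [dotProduct_mulVec_eq_sum_sum, dotProduct_mulVec_eq_sum_sum,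
    ← Equiv.sum_comp π fun u => ∑ v, M u v * (x u * x v)]
  refine Finset.sum_congr rfl fun u _ => ?_
  rw [← Equiv.sum_comp π fun v => M (π u) v * (x (π u) * x v)]
  simp only [Function.comp_apply, hM]

lemma sum_mul_orbitGram (S : Finset (Equiv.Perm V)) (x : V → ℝ) (M : Matrix V V ℝ) :
    ∑ u, ∑ v, M u v * orbitGram S x u v = ∑ π ∈ S, (x ∘ π) ⬝ᵥ M *ᵥ (x ∘ π) := by
  simp only [dotProduct_mulVec_eq_sum_sum, orbitGram, of_apply, Finset.mul_sum,
    Function.comp_apply]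
  exact (Finset.sum_congr rfl fun u _ => Finset.sum_comm).trans Finset.sum_comm

lemma sum_mul_orbitGram_nonneg (S : Finset (Equiv.Perm V)) (x : V → ℝ) {Z : Matrix V V ℝ}
    (hZ : Z.PosSemidef) : 0 ≤ ∑ u, ∑ v, Z u v * orbitGram S x u v := by
  rw [sum_mul_orbitGram]
  exact Finset.sum_nonneg fun π _ => by simpa using hZ.dotProduct_mulVec_nonneg (x ∘ π)

lemma sum_mul_orbitGram_of_invariant (S : Finset (Equiv.Perm V)) (x : V → ℝ) {M : Matrix V V ℝ}
    (hM : ∀ π ∈ S, ∀ u v, M (π u) (π v) = M u v) :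
    ∑ u, ∑ v, M u v * orbitGram S x u v = #S * (x ⬝ᵥ M *ᵥ x) := by
  rw [sum_mul_orbitGram, ← nsmul_eq_mul, ← Finset.sum_const]
  exact Finset.sum_congr rfl fun π hπ => dotProduct_mulVec_comp_perm (hM π hπ) x

lemma sum_mul_nonneg_of_smul_orbitGram_le (S : Finset (Equiv.Perm V)) (x : V → ℝ) {c : ℝ}
    (hc : 0 ≤ c) {M Z : Matrix V V ℝ} (hZnn : ∀ u v, 0 ≤ Z u v) (hZ : Z.PosSemidef)
    (hM : ∀ u v, c * orbitGram S x u v ≤ M u v) :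
    0 ≤ ∑ u, ∑ v, M u v * Z u v := calc
  0 ≤ c * ∑ u, ∑ v, Z u v * orbitGram S x u v :=
    mul_nonneg hc (sum_mul_orbitGram_nonneg S x hZ)
  _ = ∑ u, ∑ v, c * orbitGram S x u v * Z u v := by
    simp only [Finset.mul_sum]
    exact Finset.sum_congr rfl fun u _ => Finset.sum_congr rfl fun v _ => by ring
  _ ≤ ∑ u, ∑ v, M u v * Z u v :=
    Finset.sum_le_sum fun u _ => Finset.sum_le_sum fun v _ =>
      mul_le_mul_of_nonneg_right (hM u v) (hZnn u v)

end OrbitGram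

lemma sum_adjMatrix_pos {V : Type*} [Fintype V] {H : SimpleGraph V} [DecidableRel H.Adj]
    {a c : V} (hac : H.Adj a c) : 0 < ∑ u, ∑ v, H.adjMatrix ℝ u v := by
  have hnn : ∀ u v, 0 ≤ H.adjMatrix ℝ u v := fun u v => by
    rw [SimpleGraph.adjMatrix_apply]; split_ifs <;> norm_num
  refine Finset.sum_pos' (fun u _ => Finset.sum_nonneg fun v _ => hnn u v) ⟨a, mem_univ a, ?_⟩
  exact Finset.sum_pos' (fun v _ => hnn a v) ⟨c, mem_univ c, by simp [hac]⟩

section Automorphisms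

variable {V : Type*} [Fintype V] [DecidableEq V] (H : SimpleGraph V) [DecidableRel H.Adj]

lemma mul_mem_autSet_iff (σ : H ≃g H) {π : Equiv.Perm V} :
    π * σ.toEquiv ∈ autSet H ↔ π ∈ autSet H := by
  simp only [autSet, mem_filter, mem_univ, true_and, Equiv.Perm.mul_apply]
  exact ⟨fun h => σ.surjective.forall₂.2 fun u v => (h u v).trans σ.map_adj_iff.symm,
    fun h u v => (h (σ u) (σ v)).trans σ.map_adj_iff⟩

lemma sum_autSet_mul_right {M : Type*} [AddCommMonoid M] (σ : H ≃g H)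
    (f : Equiv.Perm V → M) : ∑ π ∈ autSet H, f (π * σ.toEquiv) = ∑ π ∈ autSet H, f π :=
  Finset.sum_equiv (Equiv.mulRight σ.toEquiv) (fun _ => (mul_mem_autSet_iff H σ).symm)
    fun _ _ => rfl

lemma adjMatrix_apply_of_mem_autSet {π : Equiv.Perm V} (hπ : π ∈ autSet H) (u v : V) :
    H.adjMatrix ℝ (π u) (π v) = H.adjMatrix ℝ u v := by
  simp only [autSet, mem_filter, mem_univ, true_and] at hπ
  simp only [SimpleGraph.adjMatrix_apply, hπ]

variable {H}

lemma orbitGram_autSet_apply_iso (x : V → ℝ) (σ : H ≃g H) (u v : V) :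
    orbitGram (autSet H) x (σ u) (σ v) = orbitGram (autSet H) x u v :=
  sum_autSet_mul_right H σ fun π => x (π u) * x (π v)

lemma orbitGram_autSet_apply_self (hvt : IsVertexTransitive H) (x : V → ℝ) (u : V) :
    orbitGram (autSet H) x u u = #(autSet H) * (x ⬝ᵥ x) / Fintype.card V := by
  have hconst : ∀ w, orbitGram (autSet H) x w w = orbitGram (autSet H) x u u := fun w => by
    obtain ⟨σ, rfl⟩ := hvt u w
    exact orbitGram_autSet_apply_iso x σ u u
  have htrace := sum_mul_orbitGram_of_invariant (autSet H) x (M := 1) fun π _ u v => by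
    simp [one_apply]
  simp only [one_apply, ite_mul, one_mul, zero_mul, Finset.sum_ite_eq, mem_univ, if_true,
    hconst, Finset.sum_const, card_univ, nsmul_eq_mul, one_mulVec] at htrace
  have hcard : (0 : ℝ) < Fintype.card V := by exact_mod_cast Fintype.card_pos_iff.2 ⟨u⟩
  rw [← htrace, mul_div_cancel_left₀ _ hcard.ne']

lemma orbitGram_autSet_of_adj (het : IsEdgeTransitive H) (x : V → ℝ) {a c : V}
    (hac : H.Adj a c) :
    orbitGram (autSet H) x a c =
      #(autSet H) * (x ⬝ᵥ H.adjMatrix ℝ *ᵥ x) / ∑ u, ∑ v, H.adjMatrix ℝ u v := by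
  have hconst : ∀ u v, H.Adj u v → orbitGram (autSet H) x u v = orbitGram (autSet H) x a c := by
    intro u v huv
    obtain ⟨σ, hσ⟩ := het huv hac
    rcases Sym2.eq_iff.1 hσ with ⟨rfl, rfl⟩ | ⟨rfl, rfl⟩
    · exact (orbitGram_autSet_apply_iso x σ u v).symm
    · rw [orbitGram_comm, orbitGram_autSet_apply_iso]
  have hsum := sum_mul_orbitGram_of_invariant (autSet H) x
    fun π hπ => adjMatrix_apply_of_mem_autSet H hπ
  rw [← hsum, eq_div_iff (sum_adjMatrix_pos hac).ne', mul_comm, Finset.sum_mul]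
  refine Finset.sum_congr rfl fun u _ => ?_
  rw [Finset.sum_mul]
  refine Finset.sum_congr rfl fun v _ => ?_
  by_cases huv : H.Adj u v
  · rw [hconst u v huv]
  · simp [huv]

end Automorphisms

section Spectrum

variable {V : Type*} [Fintype V] [DecidableEq V] (H : SimpleGraph V) [DecidableRel H.Adj]

lemma sum_adjMatrix_le_card_mul_lamMax :
    ∑ u, ∑ v, H.adjMatrix ℝ u v ≤ Fintype.card V * lamMax H := by
  have h := (adjMatrix_isHermitian H).dotProduct_mulVec_le_iSup_eigenvalues 1
  simpa [dotProduct_mulVec_eq_sum_sum, mul_comm, lamMax] using h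

variable {H}

lemma lamMin_neg {a c : V} (hac : H.Adj a c) : lamMin H < 0 := by
  refine (adjMatrix_isHermitian H).iInf_eigenvalues_neg (by simp) fun h0 => ?_
  simpa [hac] using congr_fun (congr_fun h0 a) c

lemma lamMax_pos {a c : V} (hac : H.Adj a c) : 0 < lamMax H :=
  pos_of_mul_pos_right ((sum_adjMatrix_pos hac).trans_le (sum_adjMatrix_le_card_mul_lamMax H))
    (Nat.cast_nonneg _)

end Spectrum

theorem sum_mul_nonneg_of_isVertexTransitive_of_isEdgeTransitive {V : Type*} [Fintype V]
    [DecidableEq V] {H : SimpleGraph V} [DecidableRel H.Adj] {a c : V} (hac : H.Adj a c)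
    (hvt : IsVertexTransitive H) (het : IsEdgeTransitive H) {Z : Matrix V V ℝ}
    (hZnn : ∀ u v, 0 ≤ Z u v) (hZ : Z.PosSemidef) :
    0 ≤ ∑ u, ∑ v, ((lamMax H - lamMin H) * (1 - H.adjMatrix ℝ u v) + lamMin H) * Z u v := by
  have : Nonempty V := ⟨a⟩
  obtain ⟨x, hxA, hxx⟩ : ∃ x : V → ℝ, H.adjMatrix ℝ *ᵥ x = lamMin H • x ∧ x ⬝ᵥ x = 1 :=
    (adjMatrix_isHermitian H).exists_unit_eigenvector_iInf_eigenvalues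
  set Λ := lamMax H
  set μ := lamMin H
  set n : ℝ := (Fintype.card V : ℝ)
  set g : ℝ := (#(autSet H) : ℝ)
  set D := ∑ u, ∑ v, H.adjMatrix ℝ u v
  have hn : 0 < n := by simpa [n] using Fintype.card_pos
  have hg : 0 < g := by
    have : (1 : Equiv.Perm V) ∈ autSet H := by simp [autSet]
    simpa [g] using Finset.card_pos.2 ⟨1, this⟩
  have hD : 0 < D := sum_adjMatrix_pos hac
  have hDΛ : D ≤ n * Λ := sum_adjMatrix_le_card_mul_lamMax H
  have hμ : μ < 0 := lamMin_neg hac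
  have hΛ : 0 < Λ := lamMax_pos hac
  have hdiag : ∀ u, orbitGram (autSet H) x u u = g / n := fun u => by
    rw [orbitGram_autSet_apply_self hvt, hxx, mul_one]
  have hedge : ∀ u v, H.Adj u v → orbitGram (autSet H) x u v = g * μ / D := fun u v huv => by
    rw [orbitGram_autSet_of_adj het x huv, hxA, dotProduct_smul, hxx, smul_eq_mul, mul_one]
  have hscale : n * Λ / g * (g / n) = Λ := by field_simp
  refine sum_mul_nonneg_of_smul_orbitGram_le (autSet H) x (c := n * Λ / g) (by positivity) hZnn hZ
    fun u v => ?_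
  rcases eq_or_ne u v with rfl | -
  · simp [hdiag, hscale]
  by_cases hadj : H.Adj u v
  · rw [hedge u v hadj]
    simp only [SimpleGraph.adjMatrix_apply, hadj, if_true, sub_self, mul_zero, zero_add]
    rw [show n * Λ / g * (g * μ / D) = μ * (n * Λ / D) by field_simp]
    have : 1 ≤ n * Λ / D := (one_le_div hD).2 hDΛ
    nlinarith
  · have hle := orbitGram_le (autSet H) x u v
    rw [hdiag, hdiag, add_self_div_two] at hle
    simp only [SimpleGraph.adjMatrix_apply, hadj, if_false, sub_zero, mul_one, sub_add_cancel]
    calc n * Λ / g * orbitGram (autSet H) x u v ≤ n * Λ / g * (g / n) := by gcongr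
      _ = Λ := hscale

end SpectralFrac

theorem SpectralFrac.scheme_sum_bound_general {V : Type*} [Fintype V] [DecidableEq V]
    (H : SimpleGraph V) [DecidableRel H.Adj]
    (hHe : H.edgeSet.Nonempty) (hvt : IsVertexTransitive H) (het : IsEdgeTransitive H)
    (Z : Matrix V V ℝ)
    (hZnn : ∀ u v, 0 ≤ Z u v) (hZpsd : Z.PosSemidef) :
    ∑ u, ∑ v, Z u v ≤
      (1 + lamMax H / |lamMin H|) * ∑ u, ∑ v, (1 - H.adjMatrix ℝ u v) * Z u v := by
  obtain ⟨a, c, hac⟩ := SimpleGraph.ne_bot_iff_exists_adj.1 (SimpleGraph.edgeSet_nonempty.1 hHe)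
  have hμ := lamMin_neg hac
  have key := sum_mul_nonneg_of_isVertexTransitive_of_isEdgeTransitive hac hvt het hZnn hZpsd
  simp only [add_mul, Finset.sum_add_distrib, mul_assoc, ← Finset.mul_sum] at key
  rw [abs_of_neg hμ, one_add_div (neg_ne_zero.2 hμ.ne), div_mul_eq_mul_div,
    le_div_iff₀ (neg_pos.2 hμ)]
  linarith

/-- **Lemma.** Let `H` be vertex- and edge-transitive with an edge, let `H_1, …, H_{m+1}` be the
orbit graphs of `Aut(H)` acting on unordered pairs of distinct vertices, with the last one equal
to `H`, and let `Z = z₀·I + Σᵢ zᵢ·A(Hᵢ)` be entrywise nonnegative and PSD.  Then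
`sum(Z) ≤ (1 + λ_max/|λ_min|)·sum((J − A) ∘ Z)` where `A` is the adjacency matrix of `H`. -/
theorem SpectralFrac.scheme_sum_bound {V : Type*} [Fintype V] [DecidableEq V]
    (H : SimpleGraph V) [DecidableRel H.Adj]
    (hHe : H.edgeSet.Nonempty) (hvt : IsVertexTransitive H) (het : IsEdgeTransitive H)
    (m : ℕ) (Hs : Fin (m + 1) → SimpleGraph V) [∀ i, DecidableRel (Hs i).Adj]
    (hne : ∀ i, (Hs i).edgeSet.Nonempty)
    (hpart : ∀ u v : V, u ≠ v → ∃! i, (Hs i).Adj u v)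
    (horb : ∀ i, ∀ ⦃u v x y : V⦄, (Hs i).Adj u v → (Hs i).Adj x y →
      ∃ π : H ≃g H, s(π u, π v) = s(x, y))
    (hinv : ∀ i (π : H ≃g H) (u v : V), (Hs i).Adj u v ↔ (Hs i).Adj (π u) (π v))
    (hlast : Hs (Fin.last m) = H)
    (z0 : ℝ) (z : Fin (m + 1) → ℝ) (Z : Matrix V V ℝ)
    (hZ : Z = z0 • (1 : Matrix V V ℝ) + ∑ i, z i • (Hs i).adjMatrix ℝ)
    (hZnn : ∀ u v, 0 ≤ Z u v) (hZpsd : Z.PosSemidef) :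
    ∑ u, ∑ v, Z u v ≤
      (1 + lamMax H / |lamMin H|) * ∑ u, ∑ v, (1 - H.adjMatrix ℝ u v) * Z u v :=
  SpectralFrac.scheme_sum_bound_general H hHe hvt het Z hZnn hZpsd
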